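/- Let q ≥ 1. Every point of the frontier of the invertible region D_θ is the image under B of a point of the frontier of the open unit cube: ∂D_θ ⊆ B(∂D_ζ). -/

import Mathlib

/-- Forward recursion for the Barndorff-Nielsen–Schou / Monahan transformation:
`fwdRow ζ k i = θ_{i,k}` (1-based), with `θ_{k,k} = ζ_k` and
`θ_{i,k} = θ_{i,k-1} - ζ_k * θ_{k-i,k-1}` for `1 ≤ i ≤ k-1`. -/
noncomputable def fwdRow (ζ : ℕ → ℝ) : ℕ → ℕ → ℝ
  | 0 => fun _ => 0
  | (k+1) => fun i =>
      if i = k + 1 then ζ (k + 1)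
      else fwdRow ζ k i - ζ (k + 1) * fwdRow ζ k (k + 1 - i)

open Classical in
/-- Reverse recursion: `(invAux q θ d).1` is row `q - d` (i.e. `θ_{·, q-d}`), and
`(invAux q θ d).2` is the proposition that `|θ_{j,j}| < 1` for all `j` with `q - d ≤ j ≤ q`.
Row `q-(d+1)` is given by `θ_{i,k-1} = (θ_{i,k} + θ_{k,k} θ_{k-i,k})/(1-θ_{k,k}^2)` with
`k = q - d` when the diagonal condition holds at all levels `≥ k`, and is `0` otherwise. -/
noncomputable def invAux (q : ℕ) (θ : ℕ → ℝ) : ℕ → (ℕ → ℝ) × Prop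
  | 0 => (θ, |θ q| < 1)
  | (d+1) =>
      let p := invAux q θ d
      let row : ℕ → ℝ := fun i =>
        if p.2 then (p.1 i + p.1 (q - d) * p.1 (q - d - i)) / (1 - (p.1 (q - d)) ^ 2)
        else 0
      (row, p.2 ∧ |row (q - d - 1)| < 1)

/-- Interpret a vector in `ℝ^q` as a 1-based sequence `ℕ → ℝ` (value `0` out of range). -/
def toSeq {q : ℕ} (v : Fin q → ℝ) : ℕ → ℝ :=
  fun n => if h : n - 1 < q then v ⟨n - 1, h⟩ else 0

/-- The map `B : ℝ^q → ℝ^q`, `B(ζ)_i = θ_{i,q}`. -/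
noncomputable def Bmap {q : ℕ} (ζ : Fin q → ℝ) : Fin q → ℝ :=
  fun i => fwdRow (toSeq ζ) q (i.1 + 1)

/-- The map `B⁻ : ℝ^q → ℝ^q`, `B⁻(θ)_i = θ_{i,i}` computed by the reverse recursion. -/
noncomputable def Binv {q : ℕ} (θ : Fin q → ℝ) : Fin q → ℝ :=
  fun i => (invAux q (toSeq θ) (q - (i.1 + 1))).1 (i.1 + 1)

/-- The invertible region `D_θ ⊆ ℝ^q`: all complex roots of
`θ(z) = 1 - θ_1 z - ⋯ - θ_q z^q` satisfy `|z| > 1`. -/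
def invRegion (q : ℕ) : Set (Fin q → ℝ) :=
  {θ | ∀ z : ℂ, 1 - ∑ i : Fin q, (θ i : ℂ) * z ^ (i.1 + 1) = 0 → 1 < ‖z‖}

/-- The open unit cube `D_ζ = (-1,1)^q ⊆ ℝ^q`. -/
def openCube (q : ℕ) : Set (Fin q → ℝ) :=
  {ζ | ∀ i, ζ i ∈ Set.Ioo (-1 : ℝ) 1}


/-!
The map `B` is the Schur–Cohn (Levinson) recursion. Write `P_k` for the moving-average polynomial
of row `k` and `G_k = X^k P_k(1/X)` for its reversal; one step of the recursion reads
`P_{k+1} = P_k - ζ_{k+1} X G_k`. For real coefficients `|G_k| = |P_k|` on the unit circle, so the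
maximum modulus principle gives `|G_k| ≤ |P_k|` on the closed disc whenever `P_k` has no zero
there. Hence a step with `|ζ_{k+1}| < 1` keeps the closed disc zero-free, and conversely: if
`P_{k+1}` is zero-free on the closed disc, its top coefficient has modulus `< 1` (the product of
the roots has modulus `> 1`), so the step can be inverted and `P_k` is zero-free as well.
Therefore `B` maps the open cube onto `D_θ`. Since `B` is continuous, `D_θ` is open and the closed
cube is compact, the closure of `D_θ` lies in `B` of the closed cube, and a preimage of a boundary
point of `D_θ` cannot lie in the open cube.
-/

open Polynomial Metric Set

theorem eq_zero_of_norm_le_mul_norm {E : Type*} [NormedAddCommGroup E] {r : ℝ} {w : E}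
    (hr : r < 1) (h : ‖w‖ ≤ r * ‖w‖) : w = 0 := by
  by_contra hw
  have := mul_lt_mul_of_pos_right hr (norm_pos_iff.2 hw)
  linarith

theorem norm_le_norm_of_forall_mem_sphere {f g : ℂ → ℂ} (hf : Differentiable ℂ f)
    (hg : Differentiable ℂ g) (hg0 : ∀ z ∈ closedBall (0 : ℂ) 1, g z ≠ 0)
    (hfg : ∀ z ∈ sphere (0 : ℂ) 1, ‖f z‖ ≤ ‖g z‖) {z : ℂ} (hz : z ∈ closedBall (0 : ℂ) 1) :
    ‖f z‖ ≤ ‖g z‖ := by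
  have hquot : DiffContOnCl ℂ (fun w => f w / g w) (ball 0 1) :=
    ⟨hf.differentiableOn.div hg.differentiableOn fun w hw => hg0 w (ball_subset_closedBall hw),
      by rw [closure_ball _ one_ne_zero]
         exact hf.continuous.continuousOn.div hg.continuous.continuousOn hg0⟩
  have hbound : ‖f z / g z‖ ≤ 1 := by
    refine Complex.norm_le_of_forall_mem_frontier_norm_le isBounded_ball hquot (fun w hw => ?_)
      (by rwa [closure_ball _ one_ne_zero])
    rw [frontier_ball _ one_ne_zero] at hw
    rw [norm_div]
    exact div_le_one_of_le₀ (hfg w hw) (norm_nonneg _)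
  rwa [norm_div, div_le_one (norm_pos_iff.2 (hg0 z hz))] at hbound

theorem eval_reflect_of_natDegree_le {K : Type*} [Field K] {p : K[X]} {N : ℕ}
    (hp : p.natDegree ≤ N) {z : K} (hz : z ≠ 0) :
    (reflect N p).eval z = z ^ N * p.eval z⁻¹ := by
  let _ := invertibleOfNonzero (inv_ne_zero hz)
  have := eval₂_reflect_mul_pow (RingHom.id K) z⁻¹ N p hp
  rw [invOf_eq_inv, inv_inv] at this
  change eval z (reflect N p) * z⁻¹ ^ N = eval z⁻¹ p at this
  rw [← this, mul_left_comm, ← mul_pow, mul_inv_cancel₀ hz, one_pow, mul_one]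

def ZeroFreeOnClosedDisk (p : ℂ[X]) : Prop := ∀ z ∈ closedBall (0 : ℂ) 1, p.eval z ≠ 0

theorem ZeroFreeOnClosedDisk.norm_leadingCoeff_lt {p : ℂ[X]} (hp : ZeroFreeOnClosedDisk p)
    (hdeg : 0 < p.natDegree) : ‖p.leadingCoeff‖ < ‖p.eval 0‖ := by
  have hcard : p.roots.card = p.natDegree := IsAlgClosed.card_roots_eq_natDegree
  have hne : p.roots ≠ 0 := by
    intro h
    rw [h, Multiset.card_zero] at hcard
    omega
  have hgt : ∀ r ∈ p.roots, 1 < ‖r‖ := fun r hr => by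
    by_contra h
    exact hp r (mem_closedBall_zero_iff.2 (not_lt.1 h)) (isRoot_of_mem_roots hr)
  have hprod : 1 < (p.roots.map fun r => ‖r‖).prod := by
    simpa using Multiset.prod_map_lt_prod_map hne (fun _ => (1 : ℝ)) _ (fun _ _ => one_pos) hgt
  have hlc : 0 < ‖p.leadingCoeff‖ :=
    norm_pos_iff.2 (leadingCoeff_ne_zero.2 (ne_zero_of_natDegree_gt hdeg))
  conv_rhs => rw [← C_leadingCoeff_mul_prod_multiset_X_sub_C hcard]
  rw [eval_mul, eval_C, eval_multiset_prod, norm_mul, Multiset.map_map]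
  have hnorm := map_multiset_prod (normHom (α := ℂ)) (p.roots.map ((eval 0) ∘ fun a => X - C a))
  simp only [normHom_apply, Multiset.map_map] at hnorm
  rw [hnorm]
  simpa [Function.comp_def] using lt_mul_of_one_lt_right hlc hprod

theorem isOpen_setOf_forall_mem_of_isCompact {X Y Z : Type*} [TopologicalSpace X]
    [TopologicalSpace Y] [TopologicalSpace Z] {F : X → Y → Z}
    (hF : Continuous (Function.uncurry F)) {K : Set Y} (hK : IsCompact K) {U : Set Z}
    (hU : IsOpen U) : IsOpen {x | ∀ y ∈ K, F x y ∈ U} :=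
  isOpen_iff_eventually.2 fun _ hx => hK.eventually_forall_of_forall_eventually fun y hy =>
    hF.continuousAt.preimage_mem_nhds (hU.mem_nhds (hx y hy))

theorem frontier_subset_image_frontier {X Y : Type*} [TopologicalSpace X] [TopologicalSpace Y]
    [T2Space Y] {f : X → Y} (hf : Continuous f) {U : Set X} {V : Set Y}
    (hU : IsCompact (closure U)) (hUV : f '' U = V) (hV : IsOpen V) :
    frontier V ⊆ f '' frontier U := by
  intro y ⟨hyV, hyV'⟩
  have hcl : closure V ⊆ f '' closure U :=
    closure_minimal (hUV ▸ image_mono subset_closure) (hU.image hf).isClosed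
  obtain ⟨x, hx, rfl⟩ := hcl hyV
  refine ⟨x, ⟨hx, fun hxU => hyV' ?_⟩, rfl⟩
  rw [hV.interior_eq, ← hUV]
  exact mem_image_of_mem f (interior_subset hxU)

noncomputable def maPoly (k : ℕ) (a : ℕ → ℝ) : ℂ[X] :=
  1 - ∑ i ∈ Finset.range k, C (a (i + 1) : ℂ) * X ^ (i + 1)

def schurStep (k : ℕ) (c : ℝ) (a : ℕ → ℝ) : ℕ → ℝ := fun i =>
  if i = k + 1 then c else a i - c * a (k + 1 - i)

theorem coeff_maPoly (k : ℕ) (a : ℕ → ℝ) (n : ℕ) :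
    (maPoly k a).coeff n = if n = 0 then 1 else if n ≤ k then -(a n : ℂ) else 0 := by
  rcases n with _ | n
  · simp [maPoly, finsetSum_coeff]
  · simp only [maPoly, coeff_sub, coeff_one, finsetSum_coeff, coeff_C_mul_X_pow]
    split_ifs <;> simp_all

theorem coeff_maPoly_zero (k : ℕ) (a : ℕ → ℝ) : (maPoly k a).coeff 0 = 1 := by
  simp [coeff_maPoly]

theorem coeff_maPoly_of_le (k : ℕ) (a : ℕ → ℝ) {n : ℕ} (h0 : n ≠ 0) (hk : n ≤ k) :
    (maPoly k a).coeff n = -(a n : ℂ) := by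
  rw [coeff_maPoly, if_neg h0, if_pos hk]

theorem coeff_maPoly_of_lt (k : ℕ) (a : ℕ → ℝ) {n : ℕ} (hk : k < n) :
    (maPoly k a).coeff n = 0 := by
  rw [coeff_maPoly, if_neg (by omega), if_neg (by omega)]

theorem natDegree_maPoly_le (k : ℕ) (a : ℕ → ℝ) : (maPoly k a).natDegree ≤ k :=
  natDegree_le_iff_coeff_eq_zero.2 fun _ hn => coeff_maPoly_of_lt k a (by exact_mod_cast hn)

theorem maPoly_congr {k : ℕ} {a b : ℕ → ℝ} (h : EqOn a b (Icc 1 k)) :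
    maPoly k a = maPoly k b := by
  ext n
  rcases Nat.eq_zero_or_pos n with rfl | hn
  · simp [coeff_maPoly_zero]
  rcases le_or_gt n k with hk | hk
  · rw [coeff_maPoly_of_le _ _ hn.ne' hk, coeff_maPoly_of_le _ _ hn.ne' hk, h ⟨hn, hk⟩]
  · rw [coeff_maPoly_of_lt _ _ hk, coeff_maPoly_of_lt _ _ hk]

theorem eval_maPoly (k : ℕ) (a : ℕ → ℝ) (z : ℂ) :
    (maPoly k a).eval z = 1 - ∑ i ∈ Finset.range k, (a (i + 1) : ℂ) * z ^ (i + 1) := by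
  simp [maPoly, eval_finsetSum]

theorem eval_maPoly_zero (k : ℕ) (a : ℕ → ℝ) : (maPoly k a).eval 0 = 1 := by
  rw [← coeff_zero_eq_eval_zero, coeff_maPoly_zero]

theorem eval_maPoly_conj (k : ℕ) (a : ℕ → ℝ) (z : ℂ) :
    (maPoly k a).eval (starRingEnd ℂ z) = starRingEnd ℂ ((maPoly k a).eval z) := by
  simp [eval_maPoly]

theorem maPoly_succ_schurStep (k : ℕ) (c : ℝ) (a : ℕ → ℝ) :
    maPoly (k + 1) (schurStep k c a) = maPoly k a - C (c : ℂ) * X * reflect k (maPoly k a) := by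
  ext (_ | n)
  · simp [coeff_maPoly_zero]
  rw [coeff_sub, mul_assoc, coeff_C_mul, coeff_X_mul, coeff_reflect]
  rcases lt_trichotomy n k with hn | rfl | hn
  · rw [revAt_le hn.le, coeff_maPoly_of_le (k + 1) _ (by omega) (by omega),
      coeff_maPoly_of_le k a (by omega) (by omega),
      coeff_maPoly_of_le k a (n := k - n) (by omega) (by omega),
      schurStep, if_neg (by omega), Nat.add_sub_add_right]
    push_cast; ring
  · rw [revAt_le le_rfl, Nat.sub_self, coeff_maPoly_zero,
      coeff_maPoly_of_lt n a (Nat.lt_succ_self n), coeff_maPoly_of_le (n + 1) _ (by omega) le_rfl,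
      schurStep, if_pos rfl]
    ring
  · rw [revAt_eq_self_of_lt hn, coeff_maPoly_of_lt (k + 1) _ (by omega),
      coeff_maPoly_of_lt k a hn, coeff_maPoly_of_lt k a (by omega : k < n + 1)]
    ring

theorem reflect_maPoly_succ_schurStep (k : ℕ) (c : ℝ) (a : ℕ → ℝ) :
    reflect (k + 1) (maPoly (k + 1) (schurStep k c a)) =
      X * reflect k (maPoly k a) - C (c : ℂ) * maPoly k a := by
  ext (_ | n)
  · simp [coeff_reflect, coeff_maPoly_zero, coeff_maPoly_of_le _ _ k.succ_ne_zero le_rfl,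
      schurStep]
  rw [coeff_sub, coeff_C_mul, coeff_X_mul, coeff_reflect, coeff_reflect]
  rcases lt_trichotomy n k with hn | rfl | hn
  · rw [revAt_le hn.le, revAt_le (by omega), Nat.add_sub_add_right,
      coeff_maPoly_of_le (k + 1) _ (n := k - n) (by omega) (by omega),
      coeff_maPoly_of_le k a (n := k - n) (by omega) (by omega),
      coeff_maPoly_of_le k a (n := n + 1) (by omega) (by omega),
      schurStep, if_neg (by omega), show k + 1 - (k - n) = n + 1 by omega]
    push_cast; ring
  · rw [revAt_le (le_refl (n + 1)), revAt_le (le_refl n), Nat.sub_self, Nat.sub_self,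
      coeff_maPoly_zero, coeff_maPoly_zero, coeff_maPoly_of_lt n a (Nat.lt_succ_self n)]
    ring
  · rw [revAt_eq_self_of_lt hn, revAt_eq_self_of_lt (by omega : k + 1 < n + 1),
      coeff_maPoly_of_lt (k + 1) _ (by omega : k + 1 < n + 1),
      coeff_maPoly_of_lt k a hn, coeff_maPoly_of_lt k a (by omega : k < n + 1)]
    ring

theorem norm_eval_reflect_maPoly_of_mem_sphere (k : ℕ) (a : ℕ → ℝ) {z : ℂ}
    (hz : z ∈ sphere (0 : ℂ) 1) :
    ‖(reflect k (maPoly k a)).eval z‖ = ‖(maPoly k a).eval z‖ := by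
  rw [mem_sphere_zero_iff_norm] at hz
  have hz0 : z ≠ 0 := norm_ne_zero_iff.1 (by rw [hz]; exact one_ne_zero)
  rw [eval_reflect_of_natDegree_le (natDegree_maPoly_le k a) hz0, Complex.inv_eq_conj hz,
    eval_maPoly_conj, norm_mul, norm_pow, hz, one_pow, one_mul, Complex.norm_conj]

theorem norm_eval_reflect_maPoly_le {k : ℕ} {a : ℕ → ℝ} (ha : ZeroFreeOnClosedDisk (maPoly k a))
    {z : ℂ} (hz : z ∈ closedBall (0 : ℂ) 1) :
    ‖(reflect k (maPoly k a)).eval z‖ ≤ ‖(maPoly k a).eval z‖ :=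
  norm_le_norm_of_forall_mem_sphere (Polynomial.differentiable _) (Polynomial.differentiable _) ha
    (fun _ hw => (norm_eval_reflect_maPoly_of_mem_sphere k a hw).le) hz

theorem ZeroFreeOnClosedDisk.maPoly_schurStep {k : ℕ} {c : ℝ} {a : ℕ → ℝ} (hc : |c| < 1)
    (ha : ZeroFreeOnClosedDisk (maPoly k a)) :
    ZeroFreeOnClosedDisk (maPoly (k + 1) (schurStep k c a)) := by
  intro z hz h0
  rw [maPoly_succ_schurStep, eval_sub, sub_eq_zero] at h0
  apply ha z hz
  refine eq_zero_of_norm_le_mul_norm hc ?_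
  calc ‖(maPoly k a).eval z‖
      = |c| * ‖z‖ * ‖(reflect k (maPoly k a)).eval z‖ := by
        rw [h0]; simp [mul_assoc]
    _ ≤ |c| * 1 * ‖(maPoly k a).eval z‖ := by
        gcongr
        · exact mem_closedBall_zero_iff.1 hz
        · exact norm_eval_reflect_maPoly_le ha hz
    _ = |c| * ‖(maPoly k a).eval z‖ := by rw [mul_one]

theorem abs_lt_one_of_zeroFreeOnClosedDisk {k : ℕ} {b : ℕ → ℝ}
    (hb : ZeroFreeOnClosedDisk (maPoly (k + 1) b)) : |b (k + 1)| < 1 := by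
  rcases eq_or_ne (b (k + 1)) 0 with h | h
  · simp [h]
  have hcoeff : (maPoly (k + 1) b).coeff (k + 1) = -(b (k + 1) : ℂ) :=
    coeff_maPoly_of_le _ _ k.succ_ne_zero le_rfl
  have hdeg : (maPoly (k + 1) b).natDegree = k + 1 :=
    natDegree_eq_of_le_of_coeff_ne_zero (natDegree_maPoly_le _ _) (by simpa [hcoeff] using h)
  have := hb.norm_leadingCoeff_lt (by omega)
  rwa [leadingCoeff, hdeg, hcoeff, eval_maPoly_zero, norm_neg, Complex.norm_real, norm_one] at this

theorem ZeroFreeOnClosedDisk.of_maPoly_schurStep {k : ℕ} {c : ℝ} {a : ℕ → ℝ}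
    (h : ZeroFreeOnClosedDisk (maPoly (k + 1) (schurStep k c a))) :
    ZeroFreeOnClosedDisk (maPoly k a) := by
  have hc : |c| < 1 := by simpa [schurStep] using abs_lt_one_of_zeroFreeOnClosedDisk h
  intro z hz h0
  have hP : (maPoly (k + 1) (schurStep k c a)).eval z =
      -c * (reflect (k + 1) (maPoly (k + 1) (schurStep k c a))).eval z := by
    rw [reflect_maPoly_succ_schurStep, maPoly_succ_schurStep]
    simp only [eval_sub, eval_mul, eval_C, eval_X, h0]
    ring
  apply h z hz
  refine eq_zero_of_norm_le_mul_norm hc ?_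
  calc _ = |c| * ‖(reflect (k + 1) (maPoly (k + 1) (schurStep k c a))).eval z‖ := by
        rw [hP]; simp
    _ ≤ _ := by gcongr; exact norm_eval_reflect_maPoly_le h hz

theorem schurStep_congr {k : ℕ} (c : ℝ) {a b : ℕ → ℝ} (h : EqOn a b (Icc 1 k)) :
    EqOn (schurStep k c a) (schurStep k c b) (Icc 1 (k + 1)) := by
  intro i ⟨hi1, hik⟩
  unfold schurStep
  split_ifs with hi
  · rfl
  · rw [h ⟨hi1, by omega⟩, h ⟨by omega, by omega⟩]

-- The witness is the reverse recursion of `invAux`.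
theorem exists_schurStep_eqOn {k : ℕ} {b : ℕ → ℝ} (hb : |b (k + 1)| < 1) :
    ∃ a, EqOn (schurStep k (b (k + 1)) a) b (Icc 1 (k + 1)) := by
  set c := b (k + 1)
  have hc : 1 - c ^ 2 ≠ 0 := by nlinarith [abs_lt.1 hb]
  refine ⟨fun i => (b i + c * b (k + 1 - i)) / (1 - c ^ 2), fun i ⟨hi1, hik⟩ => ?_⟩
  unfold schurStep
  split_ifs with hi
  · rw [hi]
  · dsimp only
    rw [Nat.sub_sub_self hik]
    field_simp
    ring

theorem fwdRow_succ (ζ : ℕ → ℝ) (k : ℕ) :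
    fwdRow ζ (k + 1) = schurStep k (ζ (k + 1)) (fwdRow ζ k) := rfl

theorem fwdRow_congr {ζ ζ' : ℕ → ℝ} {k : ℕ} (h : EqOn ζ ζ' (Icc 1 k)) :
    fwdRow ζ k = fwdRow ζ' k := by
  induction k with
  | zero => rfl
  | succ k ih =>
    rw [fwdRow_succ, fwdRow_succ, h ⟨k.succ_pos, le_rfl⟩,
      ih (h.mono (Icc_subset_Icc_right k.le_succ))]

theorem zeroFreeOnClosedDisk_maPoly_fwdRow {ζ : ℕ → ℝ} {k : ℕ}
    (hζ : ∀ j ∈ Icc 1 k, |ζ j| < 1) : ZeroFreeOnClosedDisk (maPoly k (fwdRow ζ k)) := by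
  induction k with
  | zero => simp [ZeroFreeOnClosedDisk, maPoly]
  | succ k ih =>
    rw [fwdRow_succ]
    exact (ih fun j hj => hζ j (Icc_subset_Icc_right k.le_succ hj)).maPoly_schurStep
      (hζ (k + 1) ⟨k.succ_pos, le_rfl⟩)

theorem exists_fwdRow_eqOn {k : ℕ} {b : ℕ → ℝ} (hb : ZeroFreeOnClosedDisk (maPoly k b)) :
    ∃ ζ : ℕ → ℝ, (∀ j ∈ Icc 1 k, |ζ j| < 1) ∧ EqOn (fwdRow ζ k) b (Icc 1 k) := by
  induction k generalizing b with
  | zero => exact ⟨0, fun j hj => by simp at hj, fun j hj => by simp at hj⟩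
  | succ k ih =>
    have hc := abs_lt_one_of_zeroFreeOnClosedDisk hb
    obtain ⟨a, ha⟩ := exists_schurStep_eqOn hc
    rw [← maPoly_congr ha] at hb
    obtain ⟨ζ, hζ, hζa⟩ := ih hb.of_maPoly_schurStep
    have hrow : fwdRow (Function.update ζ (k + 1) (b (k + 1))) k = fwdRow ζ k :=
      fwdRow_congr fun j hj => Function.update_of_ne (by rw [mem_Icc] at hj; omega) _ _
    refine ⟨Function.update ζ (k + 1) (b (k + 1)), fun j hj => ?_, ?_⟩
    · rcases eq_or_ne j (k + 1) with rfl | hj'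
      · rw [Function.update_self]
        exact hc
      · rw [Function.update_of_ne hj']
        exact hζ j ⟨hj.1, by have := hj.2; omega⟩
    · rw [fwdRow_succ, hrow, Function.update_self]
      exact (schurStep_congr _ hζa).trans ha

theorem toSeq_succ {q : ℕ} (v : Fin q → ℝ) (i : Fin q) : toSeq v (i + 1) = v i := by
  simp [toSeq]

theorem toSeq_comp_succ {q : ℕ} (s : ℕ → ℝ) :
    EqOn (toSeq fun i : Fin q => s (i + 1)) s (Icc 1 q) := by
  intro j ⟨hj1, hjq⟩
  simp only [toSeq, dif_pos (show j - 1 < q by omega), Nat.sub_add_cancel hj1]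

theorem eval_maPoly_toSeq {q : ℕ} (θ : Fin q → ℝ) (z : ℂ) :
    (maPoly q (toSeq θ)).eval z = 1 - ∑ i : Fin q, (θ i : ℂ) * z ^ (i.1 + 1) := by
  rw [eval_maPoly, ← Fin.sum_univ_eq_sum_range (fun i => (toSeq θ (i + 1) : ℂ) * z ^ (i + 1))]
  simp only [toSeq_succ]

theorem mem_invRegion_iff {q : ℕ} {θ : Fin q → ℝ} :
    θ ∈ invRegion q ↔ ZeroFreeOnClosedDisk (maPoly q (toSeq θ)) := by
  simp only [invRegion, ZeroFreeOnClosedDisk, eval_maPoly_toSeq, mem_ofPred_eq,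
    mem_closedBall_zero_iff]
  exact forall_congr' fun z => by rw [← not_le]; exact imp_not_comm

theorem image_Bmap_openCube (q : ℕ) : Bmap '' openCube q = invRegion q := by
  apply Subset.antisymm
  · rintro _ ⟨ζ, hζ, rfl⟩
    rw [mem_invRegion_iff]
    unfold Bmap
    rw [maPoly_congr (toSeq_comp_succ (fwdRow (toSeq ζ) q))]
    refine zeroFreeOnClosedDisk_maPoly_fwdRow fun j ⟨hj1, hjq⟩ => ?_
    obtain ⟨i, rfl⟩ : ∃ i : Fin q, (i : ℕ) + 1 = j := ⟨⟨j - 1, by omega⟩, by simp; omega⟩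
    rw [toSeq_succ, abs_lt]
    exact hζ i
  · intro θ hθ
    obtain ⟨s, hs, hsθ⟩ := exists_fwdRow_eqOn (mem_invRegion_iff.1 hθ)
    refine ⟨fun i => s (i + 1), fun i => abs_lt.1 (hs _ ⟨by omega, by omega⟩), funext fun i => ?_⟩
    rw [Bmap, fwdRow_congr (toSeq_comp_succ s), hsθ ⟨by omega, by omega⟩, toSeq_succ]

theorem isOpen_invRegion (q : ℕ) : IsOpen (invRegion q) := by
  have hopen := isOpen_setOf_forall_mem_of_isCompact
    (F := fun (θ : Fin q → ℝ) (z : ℂ) => 1 - ∑ i : Fin q, (θ i : ℂ) * z ^ (i.1 + 1))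
    (by fun_prop) (isCompact_closedBall (0 : ℂ) 1) (isOpen_compl_singleton (x := (0 : ℂ)))
  convert hopen using 1
  ext θ
  simp only [invRegion, mem_ofPred_eq, mem_closedBall_zero_iff, mem_compl_singleton_iff]
  exact forall_congr' fun z => by rw [← not_le]; exact imp_not_comm

theorem continuous_fwdRow_toSeq (q k i : ℕ) :
    Continuous fun ζ : Fin q → ℝ => fwdRow (toSeq ζ) k i := by
  have hseq : ∀ n, Continuous fun ζ : Fin q → ℝ => toSeq ζ n := fun n => by
    unfold toSeq
    split_ifs <;> fun_prop
  induction k generalizing i with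
  | zero => exact continuous_const
  | succ k ih =>
    simp only [fwdRow_succ, schurStep]
    split_ifs
    · exact hseq _
    · exact (ih i).sub ((hseq _).mul (ih _))

theorem continuous_Bmap (q : ℕ) : Continuous (Bmap (q := q)) :=
  continuous_pi fun i => continuous_fwdRow_toSeq q q (i + 1)

theorem isCompact_closure_openCube (q : ℕ) : IsCompact (closure (openCube q)) :=
  (isCompact_univ_pi fun _ => isCompact_Icc).closure_of_subset fun _ hζ i _ =>
    Ioo_subset_Icc_self (hζ i)

theorem frontier_subset_image_general {q : ℕ} :
    frontier (invRegion q) ⊆ Bmap '' frontier (openCube q) :=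
  frontier_subset_image_frontier (continuous_Bmap q) (isCompact_closure_openCube q)
    (image_Bmap_openCube q) (isOpen_invRegion q)

/-- For `q ≥ 1`, every point of the frontier of the invertible region is the image under
`B` of a point of the frontier of the open unit cube: `∂D_θ ⊆ B(∂D_ζ)`. -/
theorem frontier_subset_image {q : ℕ} (hq : 1 ≤ q) :
    frontier (invRegion q) ⊆ Bmap '' frontier (openCube q) :=
  frontier_subset_image_general
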